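/- arXiv:2505.17000 — 2 statements merged into one kernel-verified Lean document; each statement's English description precedes it below -/
import Mathlib

section
/- Fix an integer d ≥ 2, an index 0 ≤ i ≤ d, and κ as below with κ'(1) = 1. Then, as L → ∞, L^{−d/2}·M_i(L) converges to η_1^{−d/2}·A_i, where A_i := (2√π / Γ((d+1)/2)) · ∫_{ℝ^d} Π(λ)·𝟙_{O_i}(λ)·f_{1/2}(λ) dλ. (Sparse regime of Theorem 3.2: the Kac–Rice expression grows like L^{d/2}.) -/
/-!
When `κ'(1) = 1`, the chain rule at the fixed point `1` gives `κ_L'(1) = 1` and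
`κ_L''(1) = L κ''(1)`, so `η_L = (L κ''(1))⁻¹` and `L^{-d/2} η_L^{-d/2} = η_1^{-d/2}` exactly.
What remains is `GOIint d i ((1 + η_L)/2) → GOIint d i (1/2)`, i.e. continuity of the GOI integral
in `c ≥ 0`. For `0 ≤ c ≤ b`, Cauchy–Schwarz `(∑ λ_j)² ≤ d ∑ λ_j²` bounds the Gaussian factor of
`f_c` by `exp (-‖λ‖² / (2(1 + d b)))`, and `Π · Δ ≤ (∏ (1 + λ_j²))^(2d+1)`; the resulting
product of one-dimensional polynomial-times-Gaussian functions dominates uniformly in `c`.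
-/

open MeasureTheory Filter Real

noncomputable def Kd (d : ℕ) : ℝ :=
  2 ^ ((d : ℝ) / 2) * ∏ j ∈ Finset.Icc 1 d, Real.Gamma ((j : ℝ) / 2)

noncomputable def PiAbs (d : ℕ) (lam : Fin d → ℝ) : ℝ := ∏ j, |lam j|

noncomputable def DeltaV (d : ℕ) (lam : Fin d → ℝ) : ℝ :=
  ∏ h : Fin d, ∏ k : Fin d, if h < k then |lam h - lam k| else 1

/-- The density of the ordered eigenvalues of a GOI(c) matrix. -/
noncomputable def fGOI (d : ℕ) (c : ℝ) (lam : Fin d → ℝ) : ℝ :=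
  (Kd d * Real.sqrt (1 + d * c))⁻¹ * DeltaV d lam *
    Real.exp (-(∑ j, lam j ^ 2) / 2 + c * (∑ j, lam j) ^ 2 / (2 * (1 + d * c))) *
    Set.indicator {x : Fin d → ℝ | Monotone x} (fun _ => 1) lam

/-- `O_i := {λ : λ_i < 0 < λ_{i+1}}` with conventions `λ_0 = −∞`, `λ_{d+1} = +∞`
(one-based indexing; coordinates here are zero-based). -/
def Oi (d i : ℕ) : Set (Fin d → ℝ) :=
  {lam | (∀ j : Fin d, (j : ℕ) + 1 = i → lam j < 0) ∧ (∀ j : Fin d, (j : ℕ) = i → 0 < lam j)}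

noncomputable def GOIint (d i : ℕ) (c : ℝ) : ℝ :=
  ∫ lam : Fin d → ℝ,
    PiAbs d lam * Set.indicator (Oi d i) (fun _ => 1) lam * fGOI d c lam

noncomputable def etaL (κ : ℝ → ℝ) (L : ℕ) : ℝ :=
  deriv (κ^[L]) 1 / deriv (deriv (κ^[L])) 1

/-- The Kac–Rice expression for the expected number of critical points of index `i`
of the depth-`L` limiting field on `S^d`. -/
noncomputable def Mcrit (d i : ℕ) (κ : ℝ → ℝ) (L : ℕ) : ℝ :=
  2 * Real.sqrt π / Real.Gamma (((d : ℝ) + 1) / 2) * etaL κ L ^ (-(d : ℝ) / 2) *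
    GOIint d i ((1 + etaL κ L) / 2)

open Topology

section IterateDeriv

variable {𝕜 : Type*} [NontriviallyNormedField 𝕜] {f : 𝕜 → 𝕜} {x : 𝕜}

theorem ContDiff.iterate {n : WithTop ℕ∞} (hf : ContDiff 𝕜 n f) : ∀ k : ℕ, ContDiff 𝕜 n f^[k]
  | 0 => contDiff_id
  | k + 1 => by rw [Function.iterate_succ']; exact hf.comp (hf.iterate k)

theorem deriv_iterate_at_fixedPt (hf : DifferentiableAt 𝕜 f x) (hx : f x = x) (n : ℕ) :
    deriv f^[n] x = deriv f x ^ n :=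
  (HasDerivAt.iterate x hf.hasDerivAt hx n).deriv

theorem deriv_deriv_iterate_at_fixedPt (hf : ContDiff 𝕜 2 f) (hx : f x = x)
    (h1 : deriv f x = 1) (n : ℕ) : deriv (deriv f^[n]) x = n * deriv (deriv f) x := by
  have hf1 : Differentiable 𝕜 f := hf.differentiable two_ne_zero
  have hf' : Differentiable 𝕜 (deriv f) :=
    (contDiff_succ_iff_deriv.mp hf).2.2.differentiable one_ne_zero
  induction n with
  | zero => simp
  | succ n ih =>
    have hn := hf.iterate n
    have hn1 : Differentiable 𝕜 f^[n] := hn.differentiable two_ne_zero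
    have hn' : Differentiable 𝕜 (deriv f^[n]) :=
      (contDiff_succ_iff_deriv.mp hn).2.2.differentiable one_ne_zero
    have hchain : deriv f^[n + 1] = fun y => (deriv f^[n] ∘ f) y * deriv f y := by
      ext y
      rw [Function.iterate_succ]
      exact deriv_comp y (hn1 _) (hf1 y)
    rw [hchain, deriv_fun_mul ((hn' _).comp x (hf1 x)) (hf' x),
      deriv_comp x (hn' _) (hf1 x), Function.comp_apply, hx, ih, h1,
      deriv_iterate_at_fixedPt (hf1 x) hx, h1]
    push_cast
    ring

end IterateDeriv

theorem etaL_eq_inv {κ : ℝ → ℝ} (hκ : ContDiff ℝ 2 κ) (hfix : κ 1 = 1) (h1 : deriv κ 1 = 1)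
    (L : ℕ) : etaL κ L = (L * deriv (deriv κ) 1)⁻¹ := by
  rw [etaL, deriv_iterate_at_fixedPt (hκ.differentiable two_ne_zero 1) hfix, h1, one_pow,
    deriv_deriv_iterate_at_fixedPt hκ hfix h1, one_div]

lemma abs_le_one_add_sq (x : ℝ) : |x| ≤ 1 + x ^ 2 := by
  nlinarith [sq_nonneg (|x| - 1), sq_abs x]

lemma abs_sub_le_one_add_sq_mul (x y : ℝ) : |x - y| ≤ (1 + x ^ 2) * (1 + y ^ 2) := by
  nlinarith [abs_sub x y, sq_nonneg (|x| - 1), sq_nonneg (|y| - 1), sq_abs x, sq_abs y,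
    mul_nonneg (sq_nonneg x) (sq_nonneg y)]

lemma one_add_sq_pow_le (x : ℝ) (n : ℕ) : (1 + x ^ 2) ^ n ≤ 2 ^ n * (1 + (x ^ 2) ^ n) := by
  rcases le_total (x ^ 2) 1 with h | h
  · calc (1 + x ^ 2) ^ n ≤ 2 ^ n := pow_le_pow_left₀ (by positivity) (by linarith) n
      _ ≤ 2 ^ n * (1 + (x ^ 2) ^ n) :=
        le_mul_of_one_le_right (by positivity) (le_add_of_nonneg_right (by positivity))
  · calc (1 + x ^ 2) ^ n ≤ (2 * x ^ 2) ^ n := pow_le_pow_left₀ (by positivity) (by linarith) n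
      _ ≤ 2 ^ n * (1 + (x ^ 2) ^ n) := by rw [mul_pow]; gcongr; linarith

lemma integrable_one_add_sq_pow_mul_exp_neg_mul_sq {a : ℝ} (ha : 0 < a) (n : ℕ) :
    Integrable fun x : ℝ => (1 + x ^ 2) ^ n * exp (-a * x ^ 2) := by
  have hmoment : Integrable fun x : ℝ => (x ^ 2) ^ n * exp (-a * x ^ 2) := by
    have h := integrable_rpow_mul_exp_neg_mul_sq ha (s := ((2 * n : ℕ) : ℝ))
      (by linarith [(Nat.cast_nonneg (2 * n) : (0 : ℝ) ≤ _)])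
    simp_rw [rpow_natCast, pow_mul] at h
    exact h
  refine (((integrable_exp_neg_mul_sq ha).add hmoment).const_mul (2 ^ n)).mono'
    (by fun_prop) (ae_of_all _ fun x => ?_)
  rw [norm_of_nonneg (by positivity), Pi.add_apply, ← one_add_mul, ← mul_assoc]
  gcongr
  exact one_add_sq_pow_le x n

lemma indicator_one_nonneg {α : Type*} (s : Set α) (x : α) :
    0 ≤ s.indicator (fun _ => (1 : ℝ)) x :=
  Set.indicator_nonneg (fun _ _ => zero_le_one) x

lemma indicator_one_le_one {α : Type*} (s : Set α) (x : α) :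
    s.indicator (fun _ => (1 : ℝ)) x ≤ 1 :=
  Set.indicator_le_self' (fun _ _ => zero_le_one) x

lemma Kd_pos (d : ℕ) : 0 < Kd d :=
  mul_pos (rpow_pos_of_pos two_pos _) <| Finset.prod_pos fun j hj =>
    Gamma_pos_of_pos (by have := (Finset.mem_Icc.mp hj).1; positivity)

lemma PiAbs_nonneg (d : ℕ) (lam : Fin d → ℝ) : 0 ≤ PiAbs d lam :=
  Finset.prod_nonneg fun _ _ => abs_nonneg _

lemma DeltaV_nonneg (d : ℕ) (lam : Fin d → ℝ) : 0 ≤ DeltaV d lam :=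
  Finset.prod_nonneg fun _ _ => Finset.prod_nonneg fun _ _ => by split_ifs <;> positivity

lemma PiAbs_le (d : ℕ) (lam : Fin d → ℝ) : PiAbs d lam ≤ ∏ j, (1 + lam j ^ 2) :=
  Finset.prod_le_prod (fun _ _ => abs_nonneg _) fun j _ => abs_le_one_add_sq (lam j)

lemma DeltaV_le (d : ℕ) (lam : Fin d → ℝ) :
    DeltaV d lam ≤ (∏ j, (1 + lam j ^ 2)) ^ (2 * d) := by
  calc DeltaV d lam ≤ ∏ h : Fin d, ∏ k : Fin d, ((1 + lam h ^ 2) * (1 + lam k ^ 2)) := by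
        refine Finset.prod_le_prod (fun _ _ => Finset.prod_nonneg fun _ _ => ?_)
          fun h _ => Finset.prod_le_prod (fun _ _ => ?_) fun k _ => ?_
        · split_ifs <;> positivity
        · split_ifs <;> positivity
        · split_ifs
          · exact abs_sub_le_one_add_sq_mul _ _
          · exact one_le_mul_of_one_le_of_one_le (by nlinarith) (by nlinarith)
    _ = (∏ j, (1 + lam j ^ 2)) ^ (2 * d) := by
        simp [Finset.prod_mul_distrib, Finset.prod_pow, two_mul, pow_add]

lemma fGOI_nonneg (d : ℕ) (c : ℝ) (lam : Fin d → ℝ) : 0 ≤ fGOI d c lam := by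
  have := DeltaV_nonneg d lam
  have := indicator_one_nonneg {x : Fin d → ℝ | Monotone x} lam
  have := Kd_pos d
  unfold fGOI
  positivity

lemma fGOI_exponent_le {d : ℕ} {c b : ℝ} (hc : 0 ≤ c) (hcb : c ≤ b) (lam : Fin d → ℝ) :
    -(∑ j, lam j ^ 2) / 2 + c * (∑ j, lam j) ^ 2 / (2 * (1 + d * c)) ≤
      -(∑ j, lam j ^ 2) / (2 * (1 + d * b)) := by
  have hS : 0 ≤ ∑ j, lam j ^ 2 := Finset.sum_nonneg fun _ _ => sq_nonneg _
  have hCS : (∑ j, lam j) ^ 2 ≤ d * ∑ j, lam j ^ 2 := by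
    simpa using sq_sum_le_card_mul_sum_sq (s := Finset.univ) (f := lam)
  have hdc : 0 < 1 + d * c := by positivity
  calc -(∑ j, lam j ^ 2) / 2 + c * (∑ j, lam j) ^ 2 / (2 * (1 + d * c))
      ≤ -(∑ j, lam j ^ 2) / 2 + c * (d * ∑ j, lam j ^ 2) / (2 * (1 + d * c)) := by gcongr
    _ = -(∑ j, lam j ^ 2) / (2 * (1 + d * c)) := by field_simp; ring
    _ ≤ -(∑ j, lam j ^ 2) / (2 * (1 + d * b)) := by
        rw [neg_div, neg_div, neg_le_neg_iff]
        gcongr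

lemma fGOI_le {d : ℕ} {c b : ℝ} (hc : 0 ≤ c) (hcb : c ≤ b) (lam : Fin d → ℝ) :
    fGOI d c lam ≤ (Kd d)⁻¹ * DeltaV d lam * exp (-(∑ j, lam j ^ 2) / (2 * (1 + d * b))) := by
  have hK := Kd_pos d
  have hD := DeltaV_nonneg d lam
  have hsqrt : 1 ≤ √(1 + d * c) := one_le_sqrt.mpr (le_add_of_nonneg_right (by positivity))
  unfold fGOI
  calc _ ≤ (Kd d * √(1 + d * c))⁻¹ * DeltaV d lam *
        exp (-(∑ j, lam j ^ 2) / 2 + c * (∑ j, lam j) ^ 2 / (2 * (1 + d * c))) * 1 := by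
        gcongr; exact indicator_one_le_one _ _
    _ ≤ _ := by
        rw [mul_one]
        gcongr
        · exact le_mul_of_one_le_right hK.le hsqrt
        · exact fGOI_exponent_le hc hcb lam

lemma prod_one_add_sq_pow_mul_exp (d n : ℕ) (a : ℝ) (lam : Fin d → ℝ) :
    ∏ j, ((1 + lam j ^ 2) ^ n * exp (-a * lam j ^ 2)) =
      (∏ j, (1 + lam j ^ 2)) ^ n * exp (-a * ∑ j, lam j ^ 2) := by
  rw [Finset.prod_mul_distrib, Finset.prod_pow, ← exp_sum, Finset.mul_sum]

lemma GOIint_integrand_le {d : ℕ} (i : ℕ) {c b : ℝ} (hc : 0 ≤ c) (hcb : c ≤ b)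
    (lam : Fin d → ℝ) :
    PiAbs d lam * (Oi d i).indicator (fun _ => 1) lam * fGOI d c lam ≤
      (Kd d)⁻¹ * ∏ j, ((1 + lam j ^ 2) ^ (2 * d + 1) * exp (-(2 * (1 + d * b))⁻¹ * lam j ^ 2)) := by
  have hK := Kd_pos d
  have hPi := PiAbs_nonneg d lam
  have hf := fGOI_nonneg d c lam
  have hD := DeltaV_nonneg d lam
  have hexp : -(2 * (1 + d * b))⁻¹ * ∑ j, lam j ^ 2 = -(∑ j, lam j ^ 2) / (2 * (1 + d * b)) := by
    ring
  rw [prod_one_add_sq_pow_mul_exp, hexp]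
  calc _ ≤ PiAbs d lam * 1 *
        ((Kd d)⁻¹ * DeltaV d lam * exp (-(∑ j, lam j ^ 2) / (2 * (1 + d * b)))) := by
        gcongr
        · exact indicator_one_le_one _ _
        · exact fGOI_le hc hcb lam
    _ = (Kd d)⁻¹ * PiAbs d lam * DeltaV d lam *
          exp (-(∑ j, lam j ^ 2) / (2 * (1 + d * b))) := by
        ring
    _ ≤ (Kd d)⁻¹ * (∏ j, (1 + lam j ^ 2)) * (∏ j, (1 + lam j ^ 2)) ^ (2 * d) *
          exp (-(∑ j, lam j ^ 2) / (2 * (1 + d * b))) := by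
        gcongr
        · exact PiAbs_le d lam
        · exact DeltaV_le d lam
    _ = _ := by ring

lemma continuous_DeltaV (d : ℕ) : Continuous (DeltaV d) :=
  continuous_finsetProd _ fun _ _ => continuous_finsetProd _ fun _ _ => by
    split_ifs <;> fun_prop

lemma measurableSet_Oi (d i : ℕ) : MeasurableSet (Oi d i) := by
  unfold Oi
  measurability

lemma measurable_GOIint_integrand (d i : ℕ) (c : ℝ) :
    Measurable fun lam => PiAbs d lam * (Oi d i).indicator (fun _ => 1) lam * fGOI d c lam := by
  have hmono : MeasurableSet {x : Fin d → ℝ | Monotone x} := isClosed_monotone.measurableSet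
  have hO := measurableSet_Oi d i
  have hD := (continuous_DeltaV d).measurable
  unfold PiAbs fGOI
  fun_prop (disch := assumption)

lemma continuousAt_fGOI {d : ℕ} {c : ℝ} (hc : 0 < 1 + d * c) (lam : Fin d → ℝ) :
    ContinuousAt (fun c => fGOI d c lam) c := by
  have hK := Kd_pos d
  unfold fGOI
  fun_prop (disch := positivity)

theorem continuousOn_GOIint (d i : ℕ) : ContinuousOn (GOIint d i) (Set.Ici 0) := by
  intro c₀ (hc₀ : 0 ≤ c₀)
  have ha : 0 < (2 * (1 + d * (c₀ + 1)))⁻¹ := by positivity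
  refine continuousWithinAt_of_dominated
    (F := fun c lam => PiAbs d lam * (Oi d i).indicator (fun _ => 1) lam * fGOI d c lam)
    (bound := fun lam => (Kd d)⁻¹ *
      ∏ j, ((1 + lam j ^ 2) ^ (2 * d + 1) * exp (-(2 * (1 + d * (c₀ + 1)))⁻¹ * lam j ^ 2)))
    (Eventually.of_forall fun c => (measurable_GOIint_integrand d i c).aestronglyMeasurable) ?_
    ((Integrable.fintype_prod fun _ =>
      integrable_one_add_sq_pow_mul_exp_neg_mul_sq ha _).const_mul _)
    (ae_of_all _ fun lam => ?_)
  · filter_upwards [self_mem_nhdsWithin,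
      nhdsWithin_le_nhds (Iio_mem_nhds (lt_add_one c₀))] with c (hc : 0 ≤ c) hcb
    refine ae_of_all _ fun lam => ?_
    rw [norm_of_nonneg (mul_nonneg (mul_nonneg (PiAbs_nonneg d lam)
      (indicator_one_nonneg _ _)) (fGOI_nonneg d c lam))]
    exact GOIint_integrand_le i hc (le_of_lt hcb) lam
  · have : (0 : ℝ) < 1 + d * c₀ := by positivity
    exact ((continuousAt_fGOI this lam).const_mul _).continuousWithinAt

theorem statement1_general (d i : ℕ) (κ : ℝ → ℝ)
    (hsmooth : ContDiff ℝ 2 κ) (hfix : κ 1 = 1)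
    (hpos2 : 0 < deriv (deriv κ) 1)
    (hsparse : deriv κ 1 = 1) :
    Tendsto (fun L : ℕ => (L : ℝ) ^ (-(d : ℝ) / 2) * Mcrit d i κ L) atTop
      (nhds ((deriv κ 1 / deriv (deriv κ) 1) ^ (-(d : ℝ) / 2) *
        (2 * Real.sqrt π / Real.Gamma (((d : ℝ) + 1) / 2) * GOIint d i (1 / 2)))) := by
  set c₂ := deriv (deriv κ) 1
  have hη : Tendsto (fun L : ℕ => ((L : ℝ) * c₂)⁻¹) atTop (𝓝 0) :=
    (tendsto_natCast_atTop_atTop.atTop_mul_const hpos2).inv_tendsto_atTop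
  have hc : Tendsto (fun L : ℕ => (1 + ((L : ℝ) * c₂)⁻¹) / 2) atTop (𝓝[Set.Ici 0] (1 / 2)) := by
    refine tendsto_nhdsWithin_iff.mpr ⟨?_, Eventually.of_forall fun L => Set.mem_Ici.mpr ?_⟩
    · simpa using (hη.const_add 1).div_const 2
    · positivity
  have hGOI := (continuousOn_GOIint d i (1 / 2) (by norm_num)).tendsto.comp hc
  rw [hsparse, one_div]
  refine ((hGOI.const_mul _).const_mul _).congr' ?_
  filter_upwards [eventually_ge_atTop 1] with L hL
  have hL : (0 : ℝ) < L := by exact_mod_cast hL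
  have hscale : (L : ℝ) ^ (-(d : ℝ) / 2) * ((L : ℝ) * c₂)⁻¹ ^ (-(d : ℝ) / 2) =
      c₂⁻¹ ^ (-(d : ℝ) / 2) := by
    rw [← mul_rpow hL.le (by positivity), mul_inv, mul_inv_cancel_left₀ hL.ne']
  rw [Mcrit, etaL_eq_inv hsmooth hfix hsparse, Function.comp_apply, ← hscale]
  ring

/-- Sparse regime of Theorem 3.2: if `κ'(1) = 1` then `L^{−d/2}·M_i(L)` converges to
`η_1^{−d/2}·A_i`, where `A_i = (2√π/Γ((d+1)/2))·∫ Π·𝟙_{O_i}·f_{1/2}`. -/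
theorem statement1 (d i : ℕ) (hd : 2 ≤ d) (hi : i ≤ d) (κ : ℝ → ℝ)
    (hsmooth : ContDiff ℝ 2 κ) (hfix : κ 1 = 1)
    (hpos1 : 0 < deriv κ 1) (hpos2 : 0 < deriv (deriv κ) 1)
    (hsparse : deriv κ 1 = 1) :
    Tendsto (fun L : ℕ => (L : ℝ) ^ (-(d : ℝ) / 2) * Mcrit d i κ L) atTop
      (nhds ((deriv κ 1 / deriv (deriv κ) 1) ^ (-(d : ℝ) / 2) *
        (2 * Real.sqrt π / Real.Gamma (((d : ℝ) + 1) / 2) * GOIint d i (1 / 2)))) :=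
  statement1_general d i κ hsmooth hfix hpos2 hsparse
end

section
/- Let κ : ℝ → ℝ be twice continuously differentiable with κ(1) = 1, κ'(1) > 0 and κ''(1) > 0; for L ≥ 1 let κ_L denote the L-fold iterate κ∘⋯∘κ and set η_L := κ_L'(1)/κ_L''(1) and η_1 := κ'(1)/κ''(1). Then: (i) if κ'(1) < 1, then η_L → η_1·(1−κ'(1)) as L → ∞; (ii) if κ'(1) = 1, then η_L = η_1/L for every L ≥ 1; (iii) if κ'(1) > 1, then (κ'(1))^L·η_L → η_1·(κ'(1)−1) as L → ∞. (Three-regime asymptotics of η_L in the proof of Theorem 3.2.) -/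
/-
At the fixed point 1, with `a = κ'(1)` and `b = κ''(1)`, the chain rule gives `κ_L'(1) = a ^ L`
and the recursion `κ_{L+1}''(1) = b a ^ (2L) + a κ_L''(1)`, whence
`a κ_L''(1) = b a ^ L (1 + a + ⋯ + a ^ (L-1))`. Hence `η_L = η_1 / (1 + a + ⋯ + a ^ (L-1))`,
and the three regimes are those of the geometric series: it converges to `1 / (1 - a)` when
`a < 1`, equals `L` when `a = 1`, and grows like `a ^ L / (a - 1)` when `a > 1`.
-/

open Filter

open Finset Function

section Iterate

variable {𝕜 : Type*} [NontriviallyNormedField 𝕜] {κ : 𝕜 → 𝕜}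

theorem deriv_iterate_succ (hκ : Differentiable 𝕜 κ) (n : ℕ) :
    deriv (κ^[n + 1]) = fun y => deriv κ (κ^[n] y) * deriv (κ^[n]) y := by
  funext y
  rw [iterate_succ', deriv_comp y (hκ _) ((hκ.iterate n) y)]

theorem differentiable_deriv_iterate (hκ : Differentiable 𝕜 κ)
    (hκ' : Differentiable 𝕜 (deriv κ)) (n : ℕ) : Differentiable 𝕜 (deriv (κ^[n])) := by
  induction n with
  | zero => simp [differentiable_const]
  | succ n ih =>
    rw [deriv_iterate_succ hκ n]
    exact (hκ'.comp (hκ.iterate n)).mul ih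

theorem deriv_iterate_of_isFixedPt {x : 𝕜} (hκ : DifferentiableAt 𝕜 κ x) (hx : IsFixedPt κ x)
    (n : ℕ) : deriv (κ^[n]) x = deriv κ x ^ n :=
  (HasDerivAt.iterate x hκ.hasDerivAt hx n).deriv

theorem deriv_deriv_iterate_of_isFixedPt {x : 𝕜} (hκ : Differentiable 𝕜 κ)
    (hκ' : Differentiable 𝕜 (deriv κ)) (hx : IsFixedPt κ x) (n : ℕ) :
    deriv κ x * deriv (deriv (κ^[n])) x =
      deriv (deriv κ) x * deriv κ x ^ n * ∑ i ∈ range n, deriv κ x ^ i := by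
  induction n with
  | zero => simp
  | succ n ih =>
    have hfix : κ^[n] x = x := hx.iterate n
    have hd := deriv_iterate_of_isFixedPt (hκ x) hx n
    have hcomp : deriv (fun y => deriv κ (κ^[n] y)) x = deriv (deriv κ) x * deriv κ x ^ n := by
      rw [← comp_def, deriv_comp x (hκ' _) ((hκ.iterate n) x), hfix, hd]
    have hdiff : DifferentiableAt 𝕜 (fun y => deriv κ (κ^[n] y)) x := (hκ'.comp (hκ.iterate n)) x
    rw [deriv_iterate_succ hκ n, deriv_fun_mul hdiff (differentiable_deriv_iterate hκ hκ' n x),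
      hcomp, hd, hfix, sum_range_succ]
    linear_combination deriv κ x * ih

end Iterate

theorem tendsto_inv_geom_sum_of_abs_lt_one {a : ℝ} (ha : |a| < 1) :
    Tendsto (fun n : ℕ => (∑ i ∈ range n, a ^ i)⁻¹) atTop (nhds (1 - a)) := by
  have hsum := (hasSum_geometric_of_abs_lt_one ha).tendsto_sum_nat
  have h1a : 1 - a ≠ 0 := by linarith [le_abs_self a]
  simpa using hsum.inv₀ (inv_ne_zero h1a)

theorem tendsto_pow_div_geom_sum_of_one_lt {a : ℝ} (ha : 1 < a) :
    Tendsto (fun n : ℕ => a ^ n / ∑ i ∈ range n, a ^ i) atTop (nhds (a - 1)) := by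
  have hinv : Tendsto (fun n : ℕ => a⁻¹ ^ n) atTop (nhds 0) :=
    tendsto_pow_atTop_nhds_zero_of_lt_one (by positivity) (inv_lt_one_of_one_lt₀ ha)
  have hone : Tendsto (fun n : ℕ => 1 - a⁻¹ ^ n) atTop (nhds 1) := by
    simpa using tendsto_const_nhds.sub hinv
  have hlim : Tendsto (fun n : ℕ => (a - 1) * (1 - a⁻¹ ^ n)⁻¹) atTop (nhds (a - 1)) := by
    simpa using (tendsto_const_nhds (x := a - 1)).mul (hone.inv₀ one_ne_zero)
  refine hlim.congr' ?_
  filter_upwards [eventually_ge_atTop 1] with n hn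
  have hpow : 1 < a ^ n := one_lt_pow₀ ha (by omega)
  have hpow0 : a ^ n - 1 ≠ 0 := by linarith
  have ha1 : a - 1 ≠ 0 := by linarith
  rw [geom_sum_eq ha.ne' n, inv_pow]
  field_simp

theorem etaL_eq_mul_inv_geom_sum {κ : ℝ → ℝ} (hκ : Differentiable ℝ κ)
    (hκ' : Differentiable ℝ (deriv κ)) (hfix : κ 1 = 1) (ha : deriv κ 1 ≠ 0) (L : ℕ) :
    etaL κ L = deriv κ 1 / deriv (deriv κ) 1 * (∑ i ∈ range L, deriv κ 1 ^ i)⁻¹ := by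
  set a := deriv κ 1
  set b := deriv (deriv κ) 1
  have hs : deriv (deriv (κ^[L])) 1 = a ^ L * (b * ∑ i ∈ range L, a ^ i) / a := by
    rw [eq_div_iff ha, mul_comm, mul_left_comm, ← mul_assoc,
      ← deriv_deriv_iterate_of_isFixedPt hκ hκ' hfix L]
  rw [etaL, hs, deriv_iterate_of_isFixedPt (hκ 1) hfix L, div_div_eq_mul_div,
    mul_div_mul_left _ _ (pow_ne_zero L ha), ← div_div, div_eq_mul_inv]

theorem statement14_general (κ : ℝ → ℝ) (hκ : ContDiff ℝ 2 κ) (hfix : κ 1 = 1)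
    (h1 : 0 < deriv κ 1) :
    (deriv κ 1 < 1 → Tendsto (fun L : ℕ => etaL κ L) atTop
      (nhds (deriv κ 1 / deriv (deriv κ) 1 * (1 - deriv κ 1)))) ∧
    (deriv κ 1 = 1 → ∀ L : ℕ, 1 ≤ L →
      etaL κ L = (deriv κ 1 / deriv (deriv κ) 1) / L) ∧
    (1 < deriv κ 1 → Tendsto (fun L : ℕ => deriv κ 1 ^ L * etaL κ L) atTop
      (nhds (deriv κ 1 / deriv (deriv κ) 1 * (deriv κ 1 - 1)))) := by
  have hη := etaL_eq_mul_inv_geom_sum (hκ.differentiable two_ne_zero) hκ.differentiable_deriv_two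
    hfix h1.ne'
  refine ⟨fun ha => ?_, fun ha L _ => ?_, fun ha => ?_⟩
  · simp_rw [hη]
    exact tendsto_const_nhds.mul (tendsto_inv_geom_sum_of_abs_lt_one (abs_lt.2 ⟨by linarith, ha⟩))
  · simp [hη, ha, div_eq_mul_inv]
  · have hrw : ∀ L : ℕ, deriv κ 1 ^ L * etaL κ L = deriv κ 1 / deriv (deriv κ) 1 *
        (deriv κ 1 ^ L / ∑ i ∈ range L, deriv κ 1 ^ i) := fun L => by rw [hη]; ring
    simp_rw [hrw]
    exact tendsto_const_nhds.mul (tendsto_pow_div_geom_sum_of_one_lt ha)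

/-- Three-regime asymptotics of `η_L`:
(i) if `κ'(1) < 1`, `η_L → η_1·(1−κ'(1))`;
(ii) if `κ'(1) = 1`, `η_L = η_1/L` for every `L ≥ 1`;
(iii) if `κ'(1) > 1`, `(κ'(1))^L·η_L → η_1·(κ'(1)−1)`. -/
theorem statement14 (κ : ℝ → ℝ) (hκ : ContDiff ℝ 2 κ) (hfix : κ 1 = 1)
    (h1 : 0 < deriv κ 1) (h2 : 0 < deriv (deriv κ) 1) :
    (deriv κ 1 < 1 → Tendsto (fun L : ℕ => etaL κ L) atTop
      (nhds (deriv κ 1 / deriv (deriv κ) 1 * (1 - deriv κ 1)))) ∧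
    (deriv κ 1 = 1 → ∀ L : ℕ, 1 ≤ L →
      etaL κ L = (deriv κ 1 / deriv (deriv κ) 1) / L) ∧
    (1 < deriv κ 1 → Tendsto (fun L : ℕ => deriv κ 1 ^ L * etaL κ L) atTop
      (nhds (deriv κ 1 / deriv (deriv κ) 1 * (deriv κ 1 - 1)))) :=
  statement14_general κ hκ hfix h1
end
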